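/- arXiv:2206.10679 — 3 statements merged into one kernel-verified Lean document; each statement's English description precedes it below -/
import Mathlib

section
/- Let a > 1 and b > 1 be real numbers with a ≠ b. Define q : ℝ → ℝ by q(t) = (a - 1)·b^t - (b - 1)·a^t + b - a. Then the only real roots of q are t = 0 and t = 1. -/
/-!
`q` is differentiable with `q'(t) = (a - 1) log b · b^t - (b - 1) log a · a^t`. Since `a ≠ b`,
`q'(t) = 0` says that `(b / a)^t` equals a fixed constant, which happens for at most one `t`.
By Rolle's theorem, three zeros of `q` would give two distinct critical points, so the known
zeros `0` and `1` are the only ones.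
-/

open Real Set

theorem eq_or_eq_of_subsingleton_setOf_deriv_eq_zero {f f' : ℝ → ℝ}
    (hf : ∀ x, HasDerivAt f (f' x) x) (hf' : {x | f' x = 0}.Subsingleton) {c x y z : ℝ}
    (hxy : x < y) (hx : f x = c) (hy : f y = c) (hz : f z = c) : z = x ∨ z = y := by
  have rolle : ∀ {u v}, u < v → f u = f v → ∃ w ∈ Ioo u v, f' w = 0 := fun huv h =>
    exists_hasDerivAt_eq_zero huv (fun w _ => (hf w).continuousAt.continuousWithinAt) h
      fun w _ => hf w
  have no_three : ∀ {u v w}, u < v → v < w → f u = c → f v = c → f w = c → False := by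
    intro u v w huv hvw hu hv hw
    obtain ⟨s, hs, hs0⟩ := rolle huv (hu.trans hv.symm)
    obtain ⟨s', hs', hs'0⟩ := rolle hvw (hv.trans hw.symm)
    exact (hs.2.trans hs'.1).ne (hf' hs0 hs'0)
  by_contra! h
  rcases h.1.lt_or_gt with hzx | hxz
  · exact no_three hzx hxy hz hx hy
  rcases h.2.lt_or_gt with hzy | hyz
  · exact no_three hxz hzy hx hz hy
  · exact no_three hxy hyz hx hy hz

theorem subsingleton_setOf_mul_rpow_eq_mul_rpow {a b p r : ℝ} (ha : 0 < a) (hb : 0 < b)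
    (hab : a ≠ b) (hp : p ≠ 0) : {t : ℝ | p * b ^ t = r * a ^ t}.Subsingleton := by
  have ratio : ∀ {t : ℝ}, p * b ^ t = r * a ^ t → (b / a) ^ t = r / p := by
    intro t ht
    rw [div_rpow hb.le ha.le, div_eq_div_iff (rpow_pos_of_pos ha t).ne' hp]
    linear_combination ht
  intro s hs t ht
  exact (rpow_right_inj (div_pos hb ha) (div_ne_one_of_ne hab.symm)).1
    ((ratio hs).trans (ratio ht).symm)

theorem hasDerivAt_mul_rpow_sub_mul_rpow_add {a b : ℝ} (ha : 0 < a) (hb : 0 < b)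
    (p r c t : ℝ) :
    HasDerivAt (fun t => p * b ^ t - r * a ^ t + c)
      (p * (b ^ t * log b) - r * (a ^ t * log a)) t :=
  (((hasStrictDerivAt_const_rpow hb t).hasDerivAt.const_mul p).sub
    ((hasStrictDerivAt_const_rpow ha t).hasDerivAt.const_mul r)).add_const c

/-- For real `a, b > 1` with `a ≠ b`, the function
`q(t) = (a-1)·b^t - (b-1)·a^t + b - a` (real exponentials) vanishes only at `t = 0`
and `t = 1`. -/
theorem roots_of_q (a b : ℝ) (ha : 1 < a) (hb : 1 < b) (hab : a ≠ b) (t : ℝ) :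
    (a - 1) * b ^ t - (b - 1) * a ^ t + b - a = 0 ↔ t = 0 ∨ t = 1 := by
  have ha₀ : 0 < a := zero_lt_one.trans ha
  have hb₀ : 0 < b := zero_lt_one.trans hb
  have hq := hasDerivAt_mul_rpow_sub_mul_rpow_add ha₀ hb₀ (a - 1) (b - 1) (b - a)
  have hcrit : {t : ℝ | (a - 1) * (b ^ t * log b) - (b - 1) * (a ^ t * log a) = 0}.Subsingleton :=
    (subsingleton_setOf_mul_rpow_eq_mul_rpow (r := (b - 1) * log a) ha₀ hb₀ hab
      (mul_pos (sub_pos.2 ha) (log_pos hb)).ne').anti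
      fun t (ht : _ = 0) => by rw [mem_ofPred_eq]; linear_combination ht
  have hq₀ : (a - 1) * b ^ (0 : ℝ) - (b - 1) * a ^ (0 : ℝ) + (b - a) = 0 := by simp
  have hq₁ : (a - 1) * b ^ (1 : ℝ) - (b - 1) * a ^ (1 : ℝ) + (b - a) = 0 := by
    simp only [rpow_one]; ring
  rw [add_sub_assoc]
  refine ⟨fun ht => eq_or_eq_of_subsingleton_setOf_deriv_eq_zero hq hcrit one_pos hq₀ hq₁ ht, ?_⟩
  rintro (rfl | rfl) <;> assumption
end

section
/- For d ≥ 2 and the rational map f_c(z) = z^{−d} + c (with parameter c), define the orbit of 0: f_c(0) = ∞, f_c(∞) = c, and thereafter iterate. Then for each s ≥ 2, the numerator of f_c^s(0), viewed as a polynomial in c, has degree 1 + d + d² + ⋯ + d^{s−2}. -/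
open Polynomial

/-- For `d ≥ 2` and `f_c(z) = z^{-d} + c`, written homogeneously as
`(x : y) ↦ (y^d + c·x^d : x^d)`, the numerator `N s` of `f_c^s(0)` (a polynomial in the
parameter `c`, with `(N 0, D 0) = (0, 1)` representing `0`) has degree
`1 + d + ⋯ + d^{s-2}` for every `s ≥ 2`. -/
theorem degree_of_numerator_of_orbit_of_zero
    {K : Type*} [Field K] [IsAlgClosed K] [CharZero K]
    (d : ℕ) (hd : 2 ≤ d)
    (N D : ℕ → Polynomial K)
    (hN0 : N 0 = 0) (hD0 : D 0 = 1)
    (hN : ∀ s, N (s + 1) = (D s) ^ d + Polynomial.X * (N s) ^ d)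
    (hD : ∀ s, D (s + 1) = (N s) ^ d)
    (s : ℕ) (hs : 2 ≤ s) :
    (N s).natDegree = ∑ k ∈ Finset.range (s - 1), d ^ k := by
  have hd0 : d ≠ 0 := by omega
  have hN1 : N 1 = 1 := by
    rw [hN 0, hN0, hD0, one_pow, zero_pow hd0, mul_zero, add_zero]
  have hD1 : D 1 = 0 := by rw [hD 0, hN0, zero_pow hd0]
  have hN2 : N 2 = Polynomial.X := by
    rw [hN 1, hN1, hD1, one_pow, zero_pow hd0, mul_one, zero_add]
  have hD2 : D 2 = 1 := by rw [hD 1, hN1, one_pow]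
  have hN3 : N 3 = 1 + Polynomial.X ^ (d + 1) := by
    rw [hN 2, hN2, hD2, one_pow, pow_succ']
  -- sum recursion
  have hsum : ∀ m : ℕ, (∑ k ∈ Finset.range (m + 1), d ^ k)
      = d * (∑ k ∈ Finset.range m, d ^ k) + 1 := by
    intro m
    rw [Finset.sum_range_succ']
    simp [pow_succ', Finset.mul_sum]
  have key : ∀ m : ℕ, (N (m + 2)).natDegree = ∑ k ∈ Finset.range (m + 1), d ^ k := by
    intro m
    induction m using Nat.strong_induction_on with
    | _ m ih =>
      match m with
      | 0 => simp [hN2]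
      | 1 =>
        rw [hN3]
        have : (1 + Polynomial.X ^ (d + 1) : Polynomial K).natDegree = d + 1 := by
          rw [add_comm]
          compute_degree!
        rw [this, Finset.sum_range_succ]
        simp [Nat.add_comm]
      | (m + 2) =>
        have ih1 : (N (m + 3)).natDegree = ∑ k ∈ Finset.range (m + 2), d ^ k :=
          ih (m + 1) (by omega)
        have ih0 : (N (m + 2)).natDegree = ∑ k ∈ Finset.range (m + 1), d ^ k :=
          ih m (by omega)
        set A := ∑ k ∈ Finset.range (m + 1), d ^ k with hA
        have hApos : 1 ≤ A := by
          have : 1 ≤ d ^ 0 := by norm_num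
          calc 1 ≤ d ^ 0 := this
          _ ≤ A := Finset.single_le_sum (f := fun k => d ^ k) (by intro i _; positivity)
                (by simp)
        have hsum1 : (∑ k ∈ Finset.range (m + 2), d ^ k) = d * A + 1 := hsum (m + 1)
        have hNm3 : N (m + 4) = (N (m + 2)) ^ (d * d) + Polynomial.X * (N (m + 3)) ^ d := by
          rw [hN (m + 3), hD (m + 2), ← pow_mul]
        rw [hNm3]
        have e1 : ((N (m + 2)) ^ (d * d)).natDegree = d * d * A := by
          rw [natDegree_pow, ih0]
        have e2 : (Polynomial.X * (N (m + 3)) ^ d).natDegree = 1 + d * (d * A + 1) := by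
          have hne : N (m + 3) ≠ 0 := by
            intro h
            rw [h] at ih1
            simp [hsum1] at ih1
          rw [natDegree_mul X_ne_zero (pow_ne_zero _ hne), natDegree_pow, ih1, hsum1,
            natDegree_X]
        have hlt : ((N (m + 2)) ^ (d * d)).natDegree
            < (Polynomial.X * (N (m + 3)) ^ d).natDegree := by
          rw [e1, e2]; nlinarith
        rw [natDegree_add_eq_right_of_natDegree_lt hlt, e2, hsum (m + 2), hsum1]
        ring
  obtain ⟨m, rfl⟩ : ∃ m, s = m + 2 := ⟨s - 2, by omega⟩
  simpa using key m
end

section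
/- Let f be an invertible linear map of P² given by f(x:y:z) = (x : y/2 : −z/3). Then the line L = V(x + y + z) is improper under f (indeed L contains the points f^i(5:−32:27) for i = 0, 2, 3), but L is not improper under f²: there do not exist integers 0 ≤ i₀ < i₁ < i₂ such that (f²)^{i₀}(L) ∩ (f²)^{i₁}(L) ∩ (f²)^{i₂}(L) ≠ ∅. -/
/-!
`f` is induced by `diag(1, 1/2, -1/3)`, so `fⁱ(L) = V(x + 2ⁱ y + (-3)ⁱ z)`. Since `(5 : -32 : 27)`,
`f²` and `f³` of it lie on `L`, the point `f³(5 : -32 : 27)` lies on `L`, `f(L)` and `f³(L)`.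
For `f²`, a common point `(r₀ : r₁ : r₂)` of three of its images of `L` makes
`t ↦ r₀ + r₁ 4ᵗ + r₂ 9ᵗ` vanish at three reals; by Rolle the derivative
`r₁ log 4 · 4ᵗ + r₂ log 9 · 9ᵗ` then vanishes twice, which forces `r₁ = r₂ = 0`, hence `r₀ = 0`.
-/

open Real Matrix Set
open scoped LinearAlgebra.Projectivization

section Hyperplane

variable {K ι : Type*} [Field K]

def hyperplane [Fintype ι] (a : ι → K) : Set (ℙ K (ι → K)) :=
  {P | a ⬝ᵥ P.rep = 0}

theorem mk_mem_hyperplane [Fintype ι] {a v : ι → K} (hv : v ≠ 0) :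
    Projectivization.mk K v hv ∈ hyperplane a ↔ a ⬝ᵥ v = 0 := by
  obtain ⟨u, hu⟩ := Projectivization.exists_smul_eq_mk_rep K v hv
  rw [hyperplane, mem_ofPred_eq, ← hu, dotProduct_smul, smul_eq_zero_iff_eq]

def IsDiagonalMap (d : ι → K) (f : ℙ K (ι → K) → ℙ K (ι → K)) : Prop :=
  ∀ (x : ι → K) (hx : x ≠ 0) (hdx : d * x ≠ 0),
    f (Projectivization.mk K x hx) = Projectivization.mk K (d * x) hdx

namespace IsDiagonalMap

variable {d : ι → K} {f : ℙ K (ι → K) → ℙ K (ι → K)}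

theorem iterate (hf : IsDiagonalMap d f) (n : ℕ) : IsDiagonalMap (d ^ n) f^[n] := by
  induction n with
  | zero => intro x hx hdx; simp only [pow_zero, one_mul, Function.iterate_zero_apply]
  | succ n ih =>
    intro x hx hdx
    have hmul : d ^ (n + 1) * x = d ^ n * (d * x) := by rw [pow_succ, mul_assoc]
    have hd1 : d * x ≠ 0 := fun h => hdx (by rw [hmul, h, mul_zero])
    rw [Function.iterate_succ_apply, hf x hx hd1, ih _ hd1 (hmul ▸ hdx)]
    congr 1
    exact hmul.symm

theorem image_hyperplane [Fintype ι] (hf : IsDiagonalMap d f) (hd : ∀ i, d i ≠ 0)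
    (a : ι → K) : f '' hyperplane a = hyperplane (d⁻¹ * a) := by
  have hcancel : ∀ y : ι → K, d * (d⁻¹ * y) = y := fun y => by
    ext i; simp [hd i]
  have hdot : ∀ x : ι → K, (d⁻¹ * a) ⬝ᵥ (d * x) = a ⬝ᵥ x := fun x => by
    simp only [dotProduct, Pi.mul_apply, Pi.inv_apply]
    refine Finset.sum_congr rfl fun i _ => ?_
    field_simp [hd i]
  have hmul_ne : ∀ {x : ι → K}, x ≠ 0 → d * x ≠ 0 := fun {x} hx h =>
    hx (funext fun i => by simpa [hd i] using congrFun h i)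
  ext P
  constructor
  · rintro ⟨Q, hQ, rfl⟩
    induction Q using Projectivization.ind with
    | h x hx =>
      rw [hf x hx (hmul_ne hx), mk_mem_hyperplane, hdot, ← mk_mem_hyperplane hx]
      exact hQ
  · induction P using Projectivization.ind with
    | h y hy =>
      intro hP
      have hx : d⁻¹ * y ≠ 0 := fun h => hy (by rw [← hcancel y, h, mul_zero])
      refine ⟨Projectivization.mk K (d⁻¹ * y) hx, ?_, ?_⟩
      · rw [mk_mem_hyperplane, ← hdot, hcancel, ← mk_mem_hyperplane hy]
        exact hP
      · rw [hf _ hx (hmul_ne hx)]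
        congr 1
        exact hcancel y

theorem iterate_image_hyperplane [Fintype ι] (hf : IsDiagonalMap d f) (hd : ∀ i, d i ≠ 0)
    (n : ℕ) (a : ι → K) : f^[n] '' hyperplane a = hyperplane (d⁻¹ ^ n * a) := by
  rw [(hf.iterate n).image_hyperplane (fun i => pow_ne_zero n (hd i)), inv_pow]

end IsDiagonalMap

end Hyperplane

theorem eq_zero_of_exp_sum_two_zeros {α β p q s s' : ℝ} (hαβ : α ≠ β) (hss' : s ≠ s')
    (hs : p * exp (α * s) + q * exp (β * s) = 0)
    (hs' : p * exp (α * s') + q * exp (β * s') = 0) : p = 0 ∧ q = 0 := by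
  set D := exp (α * s) * exp (β * s') - exp (β * s) * exp (α * s') with hD_def
  have hD : D ≠ 0 := by
    rw [hD_def, ← exp_add, ← exp_add, sub_ne_zero, exp_injective.ne_iff]
    intro h
    exact mul_ne_zero (sub_ne_zero.2 hαβ) (sub_ne_zero.2 hss') (by linear_combination h)
  have hp : p * D = 0 := by linear_combination exp (β * s') * hs - exp (β * s) * hs'
  have hq : q * D = 0 := by linear_combination exp (α * s) * hs' - exp (α * s') * hs
  exact ⟨(mul_eq_zero.1 hp).resolve_right hD, (mul_eq_zero.1 hq).resolve_right hD⟩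

theorem eq_zero_of_exp_sum_three_zeros {α β r₀ r₁ r₂ a b c : ℝ} (hα : α ≠ 0) (hβ : β ≠ 0)
    (hαβ : α ≠ β) (hab : a < b) (hbc : b < c)
    (hφ : ∀ t ∈ ({a, b, c} : Set ℝ), r₀ + r₁ * exp (α * t) + r₂ * exp (β * t) = 0) :
    r₀ = 0 ∧ r₁ = 0 ∧ r₂ = 0 := by
  set φ : ℝ → ℝ := fun t => r₀ + r₁ * exp (α * t) + r₂ * exp (β * t)
  have hφ' : ∀ t, HasDerivAt φ (r₁ * α * exp (α * t) + r₂ * β * exp (β * t)) t := fun t => by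
    refine ((((hasDerivAt_id' t).const_mul α).exp.const_mul r₁).const_add r₀).add
      (((hasDerivAt_id' t).const_mul β).exp.const_mul r₂) |>.congr_deriv ?_
    ring
  have hcont : Continuous φ := by fun_prop
  obtain ⟨s, hs, hs0⟩ := exists_hasDerivAt_eq_zero hab hcont.continuousOn
    ((hφ a (by simp)).trans (hφ b (by simp)).symm) fun t _ => hφ' t
  obtain ⟨s', hs', hs'0⟩ := exists_hasDerivAt_eq_zero hbc hcont.continuousOn
    ((hφ b (by simp)).trans (hφ c (by simp)).symm) fun t _ => hφ' t
  obtain ⟨h₁, h₂⟩ := eq_zero_of_exp_sum_two_zeros hαβ (hs.2.trans hs'.1).ne hs0 hs'0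
  have hr₁ : r₁ = 0 := (mul_eq_zero.1 h₁).resolve_right hα
  have hr₂ : r₂ = 0 := (mul_eq_zero.1 h₂).resolve_right hβ
  refine ⟨?_, hr₁, hr₂⟩
  simpa [hr₁, hr₂] using hφ a (by simp)

theorem eq_zero_of_pow_sum_three_zeros {x y r₀ r₁ r₂ : ℝ} (hx : 0 < x) (hy : 0 < y)
    (hx1 : x ≠ 1) (hy1 : y ≠ 1) (hxy : x ≠ y) {i : Fin 3 → ℕ} (hi : StrictMono i)
    (h : ∀ k, r₀ + r₁ * x ^ i k + r₂ * y ^ i k = 0) : r₀ = 0 ∧ r₁ = 0 ∧ r₂ = 0 := by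
  refine eq_zero_of_exp_sum_three_zeros (log_ne_zero_of_pos_of_ne_one hx hx1)
    (log_ne_zero_of_pos_of_ne_one hy hy1) (fun h' => hxy (log_injOn_pos hx hy h'))
    (Nat.cast_lt.2 (hi (by decide : (0 : Fin 3) < 1)))
    (Nat.cast_lt.2 (hi (by decide : (1 : Fin 3) < 2))) ?_
  have hpow : ∀ k, r₀ + r₁ * exp (log x * i k) + r₂ * exp (log y * i k) = 0 := fun k => by
    rw [← rpow_def_of_pos hx, ← rpow_def_of_pos hy, rpow_natCast, rpow_natCast]
    exact h k
  rintro t (rfl | rfl | rfl)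
  exacts [hpow 0, hpow 1, hpow 2]

def IsImproper {α : Type*} (g : α → α) (L : Set α) : Prop :=
  ∃ i : Fin 3 → ℕ, StrictMono i ∧ (⋂ k, g^[i k] '' L).Nonempty

theorem isImproper_of_mem_iterate {α : Type*} {g : α → α} {L : Set α} {x : α} {a b : ℕ}
    (ha : 0 < a) (hab : a < b) (hx : x ∈ L) (hax : g^[a] x ∈ L) (hbx : g^[b] x ∈ L) :
    IsImproper g L := by
  refine ⟨![0, b - a, b], Fin.strictMono_iff_lt_succ.2 fun j => ?_, g^[b] x,
    mem_iInter.2 fun k => ?_⟩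
  · fin_cases j <;> simp <;> omega
  · fin_cases k
    · exact ⟨_, hbx, rfl⟩
    · refine ⟨g^[a] x, hax, ?_⟩
      change g^[b - a] (g^[a] x) = g^[b] x
      rw [← Function.iterate_add_apply, Nat.sub_add_cancel hab.le]
    · exact ⟨x, hx, rfl⟩

theorem not_isImproper_hyperplane_one {g : ℙ ℝ (Fin 3 → ℝ) → ℙ ℝ (Fin 3 → ℝ)} {s t : ℝ}
    (hg : IsDiagonalMap ![1, s, t] g) (hs : 0 < s) (ht : 0 < t) (hs1 : s ≠ 1) (ht1 : t ≠ 1)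
    (hst : s ≠ t) : ¬ IsImproper g (hyperplane 1) := by
  rintro ⟨i, hi, P, hP⟩
  have hd : ∀ j, (![1, s, t] : Fin 3 → ℝ) j ≠ 0 := by
    intro j; fin_cases j <;> simp [hs.ne', ht.ne']
  have heq : ∀ k, P.rep 0 + P.rep 1 * s⁻¹ ^ i k + P.rep 2 * t⁻¹ ^ i k = 0 := fun k => by
    have hk := mem_iInter.1 hP k
    rw [hg.iterate_image_hyperplane hd, hyperplane, mem_ofPred_eq, dotProduct,
      Fin.sum_univ_three] at hk
    norm_num [cons_val_two] at hk
    linear_combination hk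
  obtain ⟨h0, h1, h2⟩ := eq_zero_of_pow_sum_three_zeros (inv_pos.2 hs) (inv_pos.2 ht)
    (inv_ne_one.2 hs1) (inv_ne_one.2 ht1) (inv_injective.ne hst) hi heq
  exact P.rep_nonzero (by ext j; fin_cases j <;> assumption)

/-- For the invertible linear map `f(x:y:z) = (x : y/2 : −z/3)` of `P²`
(over `ℝ`), the line `L = V(x + y + z)` is improper under `f` — indeed `L` contains the
points `f^i(5 : −32 : 27)` for `i = 0, 2, 3` — but `L` is not improper under `f²`:
there are no `0 ≤ i₀ < i₁ < i₂` with `(f²)^{i₀}(L) ∩ (f²)^{i₁}(L) ∩ (f²)^{i₂}(L) ≠ ∅`. -/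
theorem improper_not_improper_square
    (f : Projectivization ℝ (Fin 3 → ℝ) → Projectivization ℝ (Fin 3 → ℝ))
    (hf : ∀ (x : Fin 3 → ℝ) (hx : x ≠ 0)
        (hx' : (![x 0, x 1 / 2, -(x 2 / 3)] : Fin 3 → ℝ) ≠ 0),
      f (Projectivization.mk ℝ x hx) =
        Projectivization.mk ℝ ![x 0, x 1 / 2, -(x 2 / 3)] hx')
    (L : Set (Projectivization ℝ (Fin 3 → ℝ)))
    (hL : L = {P | P.rep 0 + P.rep 1 + P.rep 2 = 0}) :
    (∀ i ∈ ({0, 2, 3} : Set ℕ),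
      f^[i] (Projectivization.mk ℝ ![5, -32, 27]
        (by intro h; have := congrFun h 0; norm_num at this)) ∈ L) ∧
    (∃ i : Fin 3 → ℕ, StrictMono i ∧ (⋂ k, f^[i k] '' L).Nonempty) ∧
    ¬ (∃ i : Fin 3 → ℕ, StrictMono i ∧ (⋂ k, (f ∘ f)^[i k] '' L).Nonempty) := by
  set d : Fin 3 → ℝ := ![1, 1 / 2, -(1 / 3)]
  have hdiag : IsDiagonalMap d f := fun x hx hdx => by
    have e : (![x 0, x 1 / 2, -(x 2 / 3)] : Fin 3 → ℝ) = d * x := by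
      ext j; fin_cases j <;> simp [d] <;> ring
    rw [hf x hx (e ▸ hdx)]
    congr 1
  have hd2 : d ^ 2 = ![1, 1 / 4, 1 / 9] := by ext j; fin_cases j <;> norm_num [d]
  obtain rfl : L = hyperplane 1 := by
    rw [hL]; ext P; simp [hyperplane, one_dotProduct, Fin.sum_univ_three]
  have hdp : ∀ n, d ^ n * ![5, -32, 27] ≠ 0 := fun n h => by simpa [d] using congrFun h 0
  have horbit : ∀ i ∈ ({0, 2, 3} : Set ℕ), f^[i] (Projectivization.mk ℝ ![5, -32, 27]
      (by intro h; have := congrFun h 0; norm_num at this)) ∈ hyperplane 1 := by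
    rintro i (rfl | rfl | rfl) <;>
      rw [hdiag.iterate _ _ _ (hdp _), mk_mem_hyperplane] <;>
      norm_num [one_dotProduct, Fin.sum_univ_three, d, cons_val_two]
  exact ⟨horbit, isImproper_of_mem_iterate two_pos (by norm_num) (horbit 0 (by simp))
    (horbit 2 (by simp)) (horbit 3 (by simp)),
    not_isImproper_hyperplane_one (hd2 ▸ hdiag.iterate 2) (by norm_num) (by norm_num)
      (by norm_num) (by norm_num) (by norm_num)⟩
end
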